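/- Let W be a vector space over C, let a(x), b(x) ∈ Hom(W, W((x))) be fields (each w ∈ W maps to a Laurent series in W((x))), let g(x) ∈ xC[[x]] with g'(0) ≠ 0, and let k be a nonnegative integer. Then (g(x₁)−g(x₂))^k a(x₁)b(x₂) ∈ Hom(W, W((x₁,x₂))) if and only if (x₁−x₂)^k a(x₁)b(x₂) ∈ Hom(W, W((x₁,x₂))). Likewise (g(x₁)−g(x₂))^k a(x₁)b(x₂) = (g(x₁)−g(x₂))^k b(x₂)a(x₁) if and only if (x₁−x₂)^k a(x₁)b(x₂) = (x₁−x₂)^k b(x₂)a(x₁). -/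

import Mathlib

open scoped Classical
noncomputable section


/-! ### Substitution machinery for (multivariable) formal power series -/

variable {R : Type*} [CommRing R] {σ : Type*}

/-- Build a multivariate power series from its coefficient function. -/
def mvmk (f : (σ →₀ ℕ) → R) : MvPowerSeries σ R := f

/-- Total degree of a monomial exponent. -/
def wt (d : σ →₀ ℕ) : ℕ := d.sum fun _ n => n

/-- Substitution `f(u)` of a multivariate series `u` with zero constant term into a
one-variable power series `f`. -/
def pcompMv (f : PowerSeries R) (u : MvPowerSeries σ R) : MvPowerSeries σ R :=
  mvmk fun d => MvPowerSeries.coeff (R := R) d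
    (∑ k ∈ Finset.range (wt d + 1), MvPowerSeries.C (σ := σ) (R := R) (PowerSeries.coeff (R := R) k f) * u ^ k)

/-- Composition `f(g)` of one-variable power series, for `g` with zero constant term. -/
def pcomp (f g : PowerSeries R) : PowerSeries R :=
  PowerSeries.mk fun n => PowerSeries.coeff (R := R) n
    (∑ k ∈ Finset.range (n + 1), PowerSeries.C (R := R) (PowerSeries.coeff (R := R) k f) * g ^ k)

/-- Substitution `F(a,b)` of two series with zero constant term into a two-variable series. -/
def subst2 (F : MvPowerSeries (Fin 2) R) (a b : MvPowerSeries σ R) : MvPowerSeries σ R :=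
  mvmk fun d => MvPowerSeries.coeff (R := R) d
    (∑ p ∈ Finset.range (wt d + 1) ×ˢ Finset.range (wt d + 1),
      MvPowerSeries.C (σ := σ) (R := R)
          (MvPowerSeries.coeff (R := R) (Finsupp.single (0 : Fin 2) p.1 + Finsupp.single (1 : Fin 2) p.2) F)
        * a ^ p.1 * b ^ p.2)

/-- The one-variable power series `f` viewed in variable `i` of a two-variable ring. -/
def toMv (i : Fin 2) (f : PowerSeries R) : MvPowerSeries (Fin 2) R :=
  mvmk fun d => if d = Finsupp.single i (d i) then PowerSeries.coeff (R := R) (d i) f else 0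

/-- `F` is a one-dimensional formal group law: `F(x,0)=x`, `F(0,y)=y`,
`F(x,F(y,z))=F(F(x,y),z)`. -/
def IsFGL (F : MvPowerSeries (Fin 2) R) : Prop :=
  subst2 F (MvPowerSeries.X 0) 0 = (MvPowerSeries.X 0 : MvPowerSeries (Fin 2) R) ∧
  subst2 F 0 (MvPowerSeries.X 1) = (MvPowerSeries.X 1 : MvPowerSeries (Fin 2) R) ∧
  subst2 F (MvPowerSeries.X 0) (subst2 F (MvPowerSeries.X 1) (MvPowerSeries.X 2)) =
    subst2 F (subst2 F (MvPowerSeries.X 0) (MvPowerSeries.X 1))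
      (MvPowerSeries.X 2 : MvPowerSeries (Fin 3) R)

/-! ### Laurent series machinery -/

/-- The Laurent series variable `x`. -/
def xL : LaurentSeries ℂ := HahnSeries.single 1 1

theorem isPWO_Ici (a : ℤ) : (Set.Ici a).IsPWO := by
  have h : Set.Ici a = (fun n : ℕ => a + n) '' Set.univ := by
    ext n
    simp only [Set.mem_Ici, Set.mem_image, Set.mem_univ, true_and]
    constructor
    · intro h; exact ⟨(n - a).toNat, by omega⟩
    · rintro ⟨m, rfl⟩; omega
  rw [h]
  exact ((Set.isWF_univ_iff.2 ⟨wellFounded_lt⟩).isPWO).image_of_monotone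
    (fun x y hxy => by omega)

/-- Substitution `c(g)` of a Laurent series `g` of order one into a Laurent series `c`,
defined coefficientwise (using `zpow` in the field of Laurent series). -/
def lsubst (g c : LaurentSeries ℂ) : LaurentSeries ℂ :=
  { coeff := fun a => ∑ m ∈ Finset.Icc c.order a, c.coeff m * (g ^ m).coeff a
    isPWO_support' := (isPWO_Ici c.order).mono (by
      intro a ha
      simp only [Function.mem_support] at ha
      by_contra hc
      simp only [Set.mem_Ici, not_le] at hc
      rw [Finset.Icc_eq_empty (by omega), Finset.sum_empty] at ha
      exact ha rfl) }

/-- Formal derivative `d/dx` of a Laurent series. -/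
def lderiv (c : LaurentSeries ℂ) : LaurentSeries ℂ :=
  { coeff := fun a => (a + 1 : ℤ) • c.coeff (a + 1)
    isPWO_support' := (c.isPWO_support.image_of_monotone
        (f := fun m => m - 1) (fun x y h => by dsimp only; omega)).mono (by
      intro a ha
      simp only [Function.mem_support] at ha
      refine ⟨a + 1, ?_, by ring⟩
      intro h0
      exact ha (by rw [h0, smul_zero])) }

/-- `j`-th Hasse derivative `(1/j!) (d/dx)^j` of a Laurent series. -/
def hasse (j : ℕ) (c : LaurentSeries ℂ) : LaurentSeries ℂ := ((Nat.factorial j : ℂ))⁻¹ • lderiv^[j] c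

/-- Taylor-expansion substitution `φ(ψ, w)`: substitute `ψ` (whose constant term in the
`z`-variables is `x`) for `x` and `w` (zero constant term) for `z` in
`φ(x,z) = Σ c_n(x) zⁿ`, via `c_n(ψ) = Σ_j (hasse_j c_n)(x) (ψ - x)^j`. -/
def fullComp (φ : PowerSeries (LaurentSeries ℂ)) (ψ w : MvPowerSeries (Fin 2) (LaurentSeries ℂ)) :
    MvPowerSeries (Fin 2) (LaurentSeries ℂ) :=
  mvmk fun d => MvPowerSeries.coeff (R := (LaurentSeries ℂ)) d
    (∑ n ∈ Finset.range (wt d + 1), ∑ j ∈ Finset.range (wt d + 1),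
      MvPowerSeries.C (σ := (Fin 2)) (R := (LaurentSeries ℂ)) (hasse j (PowerSeries.coeff (R := (LaurentSeries ℂ)) n φ))
        * (ψ - MvPowerSeries.C (σ := (Fin 2)) (R := (LaurentSeries ℂ)) xL) ^ j * w ^ n)

/-- `φ(x,z) ∈ ℂ((x))[[z]]` is an associate of the formal group law `F`:
`φ(x,0) = x` and `φ(φ(x,z₁),z₂) = φ(x,F(z₁,z₂))`. -/
def IsAssoc (F : MvPowerSeries (Fin 2) ℂ) (φ : PowerSeries (LaurentSeries ℂ)) : Prop :=
  PowerSeries.constantCoeff (R := (LaurentSeries ℂ)) φ = xL ∧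
  fullComp φ (toMv 0 φ) (MvPowerSeries.X 1) =
    fullComp φ (MvPowerSeries.C (σ := (Fin 2)) (R := (LaurentSeries ℂ)) xL)
      (MvPowerSeries.map (σ := Fin 2) (HahnSeries.C : ℂ →+* LaurentSeries ℂ) F)

/-- Application of a one-variable series `c` (as a Laurent series) to
`ψ ∈ ℂ((x))[[z]]` whose constant term is the base point `w`, by Taylor expansion at `w`. -/
def acompAt (c w : LaurentSeries ℂ) (ψ : PowerSeries (LaurentSeries ℂ)) :
    PowerSeries (LaurentSeries ℂ) :=
  PowerSeries.mk fun n => PowerSeries.coeff (R := (LaurentSeries ℂ)) n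
    (∑ j ∈ Finset.range (n + 1),
      PowerSeries.C (R := (LaurentSeries ℂ)) (lsubst w (hasse j c)) *
        (ψ - PowerSeries.C (R := (LaurentSeries ℂ)) w) ^ j)




/-! ### Vertex-algebra machinery -/

/-- `F(x₀,x₂)` viewed in `ℂ((x₀))[[x₂]]`. -/
def FB (F : MvPowerSeries (Fin 2) ℂ) : PowerSeries (LaurentSeries ℂ) :=
  PowerSeries.mk fun j => HahnSeries.ofPowerSeries ℤ ℂ
    (PowerSeries.mk fun i =>
      MvPowerSeries.coeff (R := ℂ) (Finsupp.single (0 : Fin 2) i + Finsupp.single (1 : Fin 2) j) F)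

/-- Integer power `F(x₀,x₂)^k` computed in `ℂ((x₀))[[x₂]]` (negative powers via
`Ring.inverse`, which is the genuine inverse whenever `F(x,0)=x`). -/
def Fzp (F : MvPowerSeries (Fin 2) ℂ) (k : ℤ) : PowerSeries (LaurentSeries ℂ) :=
  if 0 ≤ k then (FB F) ^ k.toNat else (Ring.inverse (FB F)) ^ (-k).toNat

/-- The coefficient of `x₀^a x₂^c` in `F(x₀,x₂)^k ∈ ℂ((x₀))[[x₂]]`. -/
def FzC (F : MvPowerSeries (Fin 2) ℂ) (k : ℤ) (a c : ℤ) : ℂ :=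
  if 0 ≤ c then (PowerSeries.coeff (R := (LaurentSeries ℂ)) c.toNat (Fzp F k)).coeff a else 0

variable {V : Type*} [AddCommGroup V] [Module ℂ V]

/-- Vacuum property: `Y(𝟙,x)v = v`. -/
def Vacuum (Y : V → V → HahnSeries ℤ V) (vac : V) : Prop :=
  ∀ v, Y vac v = HahnSeries.single 0 v

/-- Creation property: `Y(v,x)𝟙 ∈ V[[x]]` with constant term `v`.
(Here `(Y u v).coeff a` is the coefficient of `x^a` in `Y(u,x)v`.) -/
def Creation (Y : V → V → HahnSeries ℤ V) (vac : V) : Prop :=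
  ∀ v, (∀ n : ℤ, n < 0 → (Y v vac).coeff n = 0) ∧ (Y v vac).coeff 0 = v

/-- Weak `F`-associativity: for all `u,v,w` there is `l` with
`F(x₀,x₂)^l Y(u,F(x₀,x₂))Y(v,x₂)w = F(x₀,x₂)^l Y(Y(u,x₀)v,x₂)w`,
expressed through coefficients of `x₀^a x₂^b`. -/
def WeakFAssoc (F : MvPowerSeries (Fin 2) ℂ) (Y : V → V → HahnSeries ℤ V) : Prop :=
  ∀ u v w : V, ∃ l : ℕ, ∀ a b : ℤ,
    (∑ᶠ mn : ℤ × ℤ, FzC F ((l : ℤ) + mn.1) a (b - mn.2) • (Y u ((Y v w).coeff mn.2)).coeff mn.1)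
    = ∑ᶠ mn : ℤ × ℤ, FzC F (l : ℤ) (a - mn.1) (b - mn.2) • (Y ((Y u v).coeff mn.1) w).coeff mn.2

/-- Weak commutativity: for all `u,v` there is `k` with
`(x₁-x₂)^k Y(u,x₁)Y(v,x₂) = (x₁-x₂)^k Y(v,x₂)Y(u,x₁)`, in coefficients of `x₁^a x₂^b`. -/
def WeakComm (Y : V → V → HahnSeries ℤ V) : Prop :=
  ∀ u v : V, ∃ k : ℕ, ∀ (w : V) (a b : ℤ),
    (∑ i ∈ Finset.range (k + 1),
      ((-1 : ℂ) ^ (k - i) * (k.choose i : ℂ)) •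
        (Y u ((Y v w).coeff (b - (k - i)))).coeff (a - i))
    = ∑ i ∈ Finset.range (k + 1),
      ((-1 : ℂ) ^ (k - i) * (k.choose i : ℂ)) •
        (Y v ((Y u w).coeff (a - i))).coeff (b - (k - i))

/-! ### Products of fields in two variables (for Lemma on `g(x₁)-g(x₂)`) -/

variable {W : Type*} [AddCommGroup W] [Module ℂ W]

/-- Coefficient of `x₁^m x₂^n` in `q(x₁,x₂)·a(x₁)b(x₂)w`. -/
def prodCoeff (q : MvPowerSeries (Fin 2) ℂ) (a b : W →ₗ[ℂ] HahnSeries ℤ W) (w : W)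
    (m n : ℤ) : W :=
  ∑ᶠ ij : ℕ × ℕ,
    MvPowerSeries.coeff (R := ℂ) (Finsupp.single (0 : Fin 2) ij.1 + Finsupp.single (1 : Fin 2) ij.2) q •
      (a ((b w).coeff (n - ij.2))).coeff (m - ij.1)

/-- Coefficient of `x₁^m x₂^n` in `q(x₁,x₂)·b(x₂)a(x₁)w`. -/
def prodCoeff' (q : MvPowerSeries (Fin 2) ℂ) (a b : W →ₗ[ℂ] HahnSeries ℤ W) (w : W)
    (m n : ℤ) : W :=
  ∑ᶠ ij : ℕ × ℕ,
    MvPowerSeries.coeff (R := ℂ) (Finsupp.single (0 : Fin 2) ij.1 + Finsupp.single (1 : Fin 2) ij.2) q •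
      (b ((a w).coeff (m - ij.1))).coeff (n - ij.2)

/-- Membership in `Hom(W, W((x₁,x₂)))` for the two-variable coefficient family. -/
def MemHom2 (q : MvPowerSeries (Fin 2) ℂ) (a b : W →ₗ[ℂ] HahnSeries ℤ W) : Prop :=
  ∀ w : W, ∃ N : ℕ, ∀ m n : ℤ, (m < -(N : ℤ) ∨ n < -(N : ℤ)) → prodCoeff q a b w m n = 0

/-!
Since `g(x₁) - g(x₂) = (x₁ - x₂) · Σ g_{i+j+1} x₁^i x₂^j` and the second factor has
constant term `g'(0) ≠ 0`, it is a unit, so `(g(x₁) - g(x₂))^k` and `(x₁ - x₂)^k` are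
associated. Multiplication of `a(x₁)b(x₂)w` (or `b(x₂)a(x₁)w`) by power series is an action
of `ℂ[[x₁, x₂]]` on coefficient families, associative because for each exponent only finitely
many lower shifts of these families are nonzero. Both properties in question pass from `q` to
every multiple `r q`, since multiplying by `r` only moves coefficients upwards; hence they
agree on associated series.
-/

section Convolution

open Finset Function

variable {S M : Type*} [CommSemiring S] [AddCommMonoid M] [Module S M]

theorem finsum_sum_antidiagonal {A : Type*} [AddCommMonoid A] [HasAntidiagonal A]
    (F : A × A → M) (hF : HasFiniteSupport F) :
    ∑ᶠ d, ∑ p ∈ antidiagonal d, F p = ∑ᶠ p, F p := by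
  set s := hF.toFinset
  have hs : support F ⊆ s := (Set.Finite.coe_toFinset hF).superset
  have hsupp : (support fun d => ∑ p ∈ antidiagonal d, F p) ⊆ s.image fun p => p.1 + p.2 := by
    intro d hd
    obtain ⟨p, hp, hFp⟩ := exists_ne_zero_of_sum_ne_zero hd
    exact mem_image.2 ⟨p, hs hFp, mem_antidiagonal.1 hp⟩
  calc ∑ᶠ d, ∑ p ∈ antidiagonal d, F p
      = ∑ d ∈ s.image (fun p => p.1 + p.2), ∑ p ∈ antidiagonal d, F p :=
        finsum_eq_sum_of_support_subset _ hsupp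
    _ = ∑ d ∈ s.image (fun p => p.1 + p.2), ∑ p ∈ s with p.1 + p.2 = d, F p := by
        refine sum_congr rfl fun d _ => (sum_subset (fun p hp => ?_) fun p hpd hp => ?_).symm
        · exact mem_antidiagonal.2 (mem_filter.1 hp).2
        · by_contra hFp
          exact hp (mem_filter.2 ⟨hs hFp, mem_antidiagonal.1 hpd⟩)
    _ = ∑ p ∈ s, F p := sum_fiberwise_of_maps_to (fun p hp => mem_image_of_mem _ hp) F
    _ = ∑ᶠ p, F p := (finsum_eq_sum_of_support_subset F hs).symm

namespace MvPowerSeries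

variable {σ : Type*}

/-- `c` stands for the formal series `Σ_x c x · t^x` with exponents `x ∈ ℤ^σ`, and
`convolve q c` for its product with `q`. -/
def convolve (q : MvPowerSeries σ S) (c : (σ → ℤ) → M) (x : σ → ℤ) : M :=
  ∑ᶠ d : σ →₀ ℕ, coeff d q • c fun i => x i - d i

def HasFiniteLowerSupport (c : (σ → ℤ) → M) : Prop :=
  ∀ x : σ → ℤ, HasFiniteSupport fun d : σ →₀ ℕ => c fun i => x i - d i

theorem convolve_mul (q r : MvPowerSeries σ S) {c : (σ → ℤ) → M}
    (hc : HasFiniteLowerSupport c) (x : σ → ℤ) :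
    convolve (q * r) c x = convolve q (convolve r c) x := by
  classical
  set F : (σ →₀ ℕ) × (σ →₀ ℕ) → M :=
    fun p => (coeff p.1 q * coeff p.2 r) • c fun i => x i - (p.1 + p.2) i
  have hF : HasFiniteSupport F := by
    refine ((hc x).preimage' (f := fun p : (σ →₀ ℕ) × (σ →₀ ℕ) => p.1 + p.2)
      fun d _ => (antidiagonal d).finite_toSet.subset fun p hp => mem_antidiagonal.2 hp).subset ?_
    intro p hp
    exact right_ne_zero_of_smul hp
  calc convolve (q * r) c x = ∑ᶠ d, ∑ p ∈ antidiagonal d, F p := by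
        refine finsum_congr fun d => ?_
        rw [coeff_mul, sum_smul]
        exact sum_congr rfl fun p hp => by rw [← mem_antidiagonal.1 hp]
    _ = ∑ᶠ e, ∑ᶠ f, F (e, f) := by rw [finsum_sum_antidiagonal F hF, finsum_curry F hF]
    _ = convolve q (convolve r c) x := by
        refine finsum_congr fun e => ?_
        rw [convolve, smul_finsum' _ ((hc _).subset fun f hf => right_ne_zero_of_smul hf)]
        refine finsum_congr fun f => ?_
        simp only [F, mul_smul, Finsupp.add_apply, Nat.cast_add, sub_add_eq_sub_sub]

theorem convolve_eq_zero_of_isLowerSet (q : MvPowerSeries σ S) {c : (σ → ℤ) → M}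
    {L : Set (σ → ℤ)} (hL : IsLowerSet L) (hc : ∀ y ∈ L, c y = 0) {x : σ → ℤ}
    (hx : x ∈ L) :
    convolve q c x = 0 :=
  finsum_eq_zero_of_forall_eq_zero fun d => by
    rw [hc _ (hL (fun i => by simp) hx), smul_zero]

end MvPowerSeries

end Convolution

section FinTwo

open Function MvPowerSeries

theorem Finsupp.eq_single_iff_fin_two {M : Type*} [Zero M] (d : Fin 2 →₀ M) {i j : Fin 2}
    (hij : i ≠ j) : d = Finsupp.single i (d i) ↔ d j = 0 := by
  rw [Finsupp.ext_iff]
  fin_cases i <;> fin_cases j <;> simp_all [Fin.forall_fin_two, eq_comm]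

theorem finsum_fin_two_finsupp {M : Type*} [AddCommMonoid M] (f : (Fin 2 →₀ ℕ) → M) :
    ∑ᶠ d, f d = ∑ᶠ ij : ℕ × ℕ, f (Finsupp.single 0 ij.1 + Finsupp.single 1 ij.2) := by
  rw [← finsum_comp_equiv (finTwoArrowEquiv' ℕ).symm]
  refine finsum_congr fun ij => congrArg f ?_
  ext k
  fin_cases k <;> simp

theorem hasFiniteLowerSupport_coeff {M : Type*} [AddCommMonoid M] (φ : ℤ → HahnSeries ℤ M)
    {N : ℤ} (hφ : ∀ n < N, φ n = 0) {i j : Fin 2} (hij : i ≠ j) :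
    HasFiniteLowerSupport fun x : Fin 2 → ℤ => (φ (x j)).coeff (x i) := by
  intro x
  -- `d j` is bounded because `φ` vanishes below `N`, and then `d i` by the orders of the
  -- finitely many series `φ (x j - t)` that remain.
  set R := (x j - N).toNat
  set K := (Finset.range (R + 1)).sup fun t => (x i - (φ (x j - t)).order).toNat
  refine (Set.finite_Iic (Finsupp.single j R + Finsupp.single i K)).subset fun d hd => ?_
  have hφd : φ (x j - d j) ≠ 0 := fun h => hd (by simp [h])
  have hdj : d j ≤ R := by
    by_contra h
    exact hφd (hφ _ (by omega))
  have hdi : d i ≤ K := by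
    have hord := HahnSeries.order_le_of_coeff_ne_zero hd
    have hK : (x i - (φ (x j - d j)).order).toNat ≤ K :=
      Finset.le_sup (f := fun t : ℕ => (x i - (φ (x j - t)).order).toNat)
        (Finset.mem_range.2 (by omega))
    simp only at hord
    omega
  intro k
  fin_cases i <;> fin_cases j <;> fin_cases k <;> simp_all

end FinTwo

section Factor

open MvPowerSeries

def diffQuotient (g : PowerSeries R) : MvPowerSeries (Fin 2) R :=
  mvmk fun d => PowerSeries.coeff (d 0 + d 1 + 1) g

theorem coeff_toMv (i : Fin 2) (g : PowerSeries R) (d : Fin 2 →₀ ℕ) :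
    coeff d (toMv i g) = if d = Finsupp.single i (d i) then PowerSeries.coeff (d i) g else 0 :=
  rfl

theorem coeff_diffQuotient (g : PowerSeries R) (d : Fin 2 →₀ ℕ) :
    coeff d (diffQuotient g) = PowerSeries.coeff (d 0 + d 1 + 1) g :=
  rfl

theorem constantCoeff_diffQuotient (g : PowerSeries R) :
    constantCoeff (diffQuotient g) = PowerSeries.coeff 1 g :=
  rfl

theorem toMv_sub_toMv (g : PowerSeries R) :
    toMv 0 g - toMv 1 g = (X 0 - X 1) * diffQuotient g := by
  ext d
  rw [sub_mul, map_sub, map_sub, X_def, X_def, coeff_monomial_mul, coeff_monomial_mul,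
    coeff_toMv, coeff_toMv, coeff_diffQuotient, coeff_diffQuotient]
  simp only [Finsupp.eq_single_iff_fin_two _ zero_ne_one,
    Finsupp.eq_single_iff_fin_two _ one_ne_zero,
    Finsupp.single_le_iff, Finsupp.tsub_apply, Finsupp.single_eq_same,
    Finsupp.single_eq_of_ne zero_ne_one, Finsupp.single_eq_of_ne one_ne_zero, one_mul, tsub_zero,
    Nat.one_le_iff_ne_zero]
  generalize d 0 = m, d 1 = n
  rcases m with _ | m <;> rcases n with _ | n <;> simp [add_assoc, add_left_comm]

theorem associated_X_sub_X_toMv_sub_toMv {g : PowerSeries R} (hg : IsUnit (PowerSeries.coeff 1 g)) :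
    Associated (X 0 - X 1 : MvPowerSeries (Fin 2) R) (toMv 0 g - toMv 1 g) := by
  rw [toMv_sub_toMv]
  exact associated_mul_unit_right _ _
    (isUnit_iff_constantCoeff.2 (by rwa [constantCoeff_diffQuotient]))

end Factor

section FieldProducts

open MvPowerSeries

variable (a b : W →ₗ[ℂ] HahnSeries ℤ W) (w : W)

theorem convolve_eq_prodCoeff (q : MvPowerSeries (Fin 2) ℂ) (x : Fin 2 → ℤ) :
    convolve q (fun y => (a ((b w).coeff (y 1))).coeff (y 0)) x =
      prodCoeff q a b w (x 0) (x 1) := by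
  rw [convolve, finsum_fin_two_finsupp]
  refine finsum_congr fun ij => ?_
  simp

theorem convolve_eq_prodCoeff' (q : MvPowerSeries (Fin 2) ℂ) (x : Fin 2 → ℤ) :
    convolve q (fun y => (b ((a w).coeff (y 0))).coeff (y 1)) x =
      prodCoeff' q a b w (x 0) (x 1) := by
  rw [convolve, finsum_fin_two_finsupp]
  refine finsum_congr fun ij => ?_
  simp

theorem hasFiniteLowerSupport_fieldProd {f g : W →ₗ[ℂ] HahnSeries ℤ W} {i j : Fin 2}
    (hij : i ≠ j) :
    HasFiniteLowerSupport fun y : Fin 2 → ℤ => (f ((g w).coeff (y j))).coeff (y i) :=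
  hasFiniteLowerSupport_coeff (fun n => f ((g w).coeff n)) (N := (g w).order)
    (fun _ hn => by rw [HahnSeries.coeff_eq_zero_of_lt_order hn, map_zero]) hij

theorem prodCoeff_mul (q r : MvPowerSeries (Fin 2) ℂ) (x : Fin 2 → ℤ) :
    prodCoeff (r * q) a b w (x 0) (x 1) =
      convolve r (fun y => prodCoeff q a b w (y 0) (y 1)) x := by
  simp only [← convolve_eq_prodCoeff]
  exact convolve_mul r q (hasFiniteLowerSupport_fieldProd w zero_ne_one) x

theorem prodCoeff'_mul (q r : MvPowerSeries (Fin 2) ℂ) (x : Fin 2 → ℤ) :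
    prodCoeff' (r * q) a b w (x 0) (x 1) =
      convolve r (fun y => prodCoeff' q a b w (y 0) (y 1)) x := by
  simp only [← convolve_eq_prodCoeff']
  exact convolve_mul r q (hasFiniteLowerSupport_fieldProd w one_ne_zero) x

variable {a b} {q q' : MvPowerSeries (Fin 2) ℂ}

theorem MemHom2.of_dvd (hq : MemHom2 q a b) (h : q ∣ q') : MemHom2 q' a b := by
  obtain ⟨r, rfl⟩ := dvd_iff_exists_eq_mul_left.1 h
  intro w
  obtain ⟨N, hN⟩ := hq w
  have hL : IsLowerSet {y : Fin 2 → ℤ | y 0 < -N ∨ y 1 < -N} := fun _ _ hzy hy =>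
    hy.imp (hzy 0).trans_lt (hzy 1).trans_lt
  exact ⟨N, fun m n hmn => (prodCoeff_mul a b w q r ![m, n]).trans
    (convolve_eq_zero_of_isLowerSet r hL (fun y hy => hN _ _ hy) hmn)⟩

theorem prodCoeff_eq_prodCoeff'_of_dvd
    (hq : ∀ w m n, prodCoeff q a b w m n = prodCoeff' q a b w m n) (h : q ∣ q') (m n : ℤ) :
    prodCoeff q' a b w m n = prodCoeff' q' a b w m n := by
  obtain ⟨r, rfl⟩ := dvd_iff_exists_eq_mul_left.1 h
  calc prodCoeff (r * q) a b w m n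
      = convolve r (fun y => prodCoeff q a b w (y 0) (y 1)) ![m, n] :=
        prodCoeff_mul a b w q r ![m, n]
    _ = convolve r (fun y => prodCoeff' q a b w (y 0) (y 1)) ![m, n] := by simp only [hq]
    _ = prodCoeff' (r * q) a b w m n := (prodCoeff'_mul a b w q r ![m, n]).symm

end FieldProducts

namespace VFA

theorem statement14_general {W : Type*} [AddCommGroup W] [Module ℂ W]
    (a b : W →ₗ[ℂ] HahnSeries ℤ W) (g : PowerSeries ℂ)
    (hg1 : PowerSeries.coeff (R := ℂ) 1 g ≠ 0) (k : ℕ) :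
    (MemHom2 ((toMv 0 g - toMv 1 g) ^ k) a b ↔
      MemHom2 ((MvPowerSeries.X 0 - MvPowerSeries.X 1 : MvPowerSeries (Fin 2) ℂ) ^ k) a b) ∧
    ((∀ (w : W) (m n : ℤ), prodCoeff ((toMv 0 g - toMv 1 g) ^ k) a b w m n =
        prodCoeff' ((toMv 0 g - toMv 1 g) ^ k) a b w m n) ↔
      (∀ (w : W) (m n : ℤ),
        prodCoeff ((MvPowerSeries.X 0 - MvPowerSeries.X 1 : MvPowerSeries (Fin 2) ℂ) ^ k) a b w m n =
        prodCoeff' ((MvPowerSeries.X 0 - MvPowerSeries.X 1 : MvPowerSeries (Fin 2) ℂ) ^ k) a b w m n)) := by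
  have h := (associated_X_sub_X_toMv_sub_toMv (isUnit_iff_ne_zero.2 hg1)).pow_pow (n := k)
  exact ⟨⟨fun hq => hq.of_dvd h.symm.dvd, fun hq => hq.of_dvd h.dvd⟩,
    ⟨fun hq w => prodCoeff_eq_prodCoeff'_of_dvd w hq h.symm.dvd,
      fun hq w => prodCoeff_eq_prodCoeff'_of_dvd w hq h.dvd⟩⟩

theorem statement14 {W : Type*} [AddCommGroup W] [Module ℂ W]
    (a b : W →ₗ[ℂ] HahnSeries ℤ W) (g : PowerSeries ℂ)
    (hg0 : PowerSeries.constantCoeff (R := ℂ) g = 0) (hg1 : PowerSeries.coeff (R := ℂ) 1 g ≠ 0) (k : ℕ) :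
    (MemHom2 ((toMv 0 g - toMv 1 g) ^ k) a b ↔
      MemHom2 ((MvPowerSeries.X 0 - MvPowerSeries.X 1 : MvPowerSeries (Fin 2) ℂ) ^ k) a b) ∧
    ((∀ (w : W) (m n : ℤ), prodCoeff ((toMv 0 g - toMv 1 g) ^ k) a b w m n =
        prodCoeff' ((toMv 0 g - toMv 1 g) ^ k) a b w m n) ↔
      (∀ (w : W) (m n : ℤ),
        prodCoeff ((MvPowerSeries.X 0 - MvPowerSeries.X 1 : MvPowerSeries (Fin 2) ℂ) ^ k) a b w m n =
        prodCoeff' ((MvPowerSeries.X 0 - MvPowerSeries.X 1 : MvPowerSeries (Fin 2) ℂ) ^ k) a b w m n)) :=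
  statement14_general a b g hg1 k

end VFA
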